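/- Suppose Assumption (B) holds. Then the boundary trace inequality holds: for every s > 0 and every test function f, μ_W^∂(f²) ≤ s·g_V(f) + ( s^{-1}·C₀²C̄₂² + C₀C̄₁ )·μ_V(f²). -/

import Mathlib

open MeasureTheory Real

noncomputable section

def Hs (d : ℕ) : Set (EuclideanSpace ℝ (Fin (d + 1))) := {x | 0 < x 0}

def iota (d : ℕ) (y : EuclideanSpace ℝ (Fin d)) : EuclideanSpace ℝ (Fin (d + 1)) :=
  WithLp.toLp 2 (Fin.cons 0 (WithLp.ofLp y))

def IsTest (d : ℕ) (f : EuclideanSpace ℝ (Fin (d + 1)) → ℝ) : Prop :=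
  ContDiff ℝ 1 f ∧ (∃ C, ∀ x, |f x| ≤ C) ∧ ∃ C, ∀ x, ‖gradient f x‖ ≤ C

def IsTestB (d : ℕ) (g : EuclideanSpace ℝ (Fin d) → ℝ) : Prop :=
  ContDiff ℝ 1 g ∧ (∃ C, ∀ y, |g y| ≤ C) ∧ ∃ C, ∀ y, ‖gradient g y‖ ≤ C

def ZV (d : ℕ) (V : EuclideanSpace ℝ (Fin (d + 1)) → ℝ) : ℝ :=
  ∫ x in Hs d, Real.exp (V x)

def ZW (d : ℕ) (W : EuclideanSpace ℝ (Fin d) → ℝ) : ℝ :=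
  ∫ y, Real.exp (W y)

/-- mean of `φ` under `μ_V`. -/
def muV (d : ℕ) (V : EuclideanSpace ℝ (Fin (d + 1)) → ℝ)
    (φ : EuclideanSpace ℝ (Fin (d + 1)) → ℝ) : ℝ :=
  (ZV d V)⁻¹ * ∫ x in Hs d, φ x * Real.exp (V x)

/-- mean of `ψ` under `ν_W`. -/
def nuW (d : ℕ) (W : EuclideanSpace ℝ (Fin d) → ℝ)
    (ψ : EuclideanSpace ℝ (Fin d) → ℝ) : ℝ :=
  (ZW d W)⁻¹ * ∫ y, ψ y * Real.exp (W y)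

def theta (d : ℕ) (V : EuclideanSpace ℝ (Fin (d + 1)) → ℝ)
    (W : EuclideanSpace ℝ (Fin d) → ℝ) (γ : ℝ) : ℝ :=
  γ * ZW d W / (γ * ZW d W + ZV d V)

/-- mean of `φ` under `μ = θ μ_V + (1-θ) μ_W^∂`. -/
def muM (d : ℕ) (V : EuclideanSpace ℝ (Fin (d + 1)) → ℝ)
    (W : EuclideanSpace ℝ (Fin d) → ℝ) (γ : ℝ)
    (φ : EuclideanSpace ℝ (Fin (d + 1)) → ℝ) : ℝ :=
  theta d V W γ * muV d V φ + (1 - theta d V W γ) * nuW d W (fun y => φ (iota d y))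

def gV (d : ℕ) (V f : EuclideanSpace ℝ (Fin (d + 1)) → ℝ) : ℝ :=
  muV d V (fun x => ‖gradient f x‖ ^ 2)

def gW (d : ℕ) (W : EuclideanSpace ℝ (Fin d) → ℝ)
    (f : EuclideanSpace ℝ (Fin (d + 1)) → ℝ) : ℝ :=
  nuW d W (fun y => ‖gradient (fun z => f (iota d z)) y‖ ^ 2)

def Edir (d : ℕ) (V : EuclideanSpace ℝ (Fin (d + 1)) → ℝ)
    (W : EuclideanSpace ℝ (Fin d) → ℝ) (γ δ : ℝ)
    (f : EuclideanSpace ℝ (Fin (d + 1)) → ℝ) : ℝ :=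
  theta d V W γ * gV d V f + (1 - theta d V W γ) * δ * gW d W f

def supNorm (d : ℕ) (f : EuclideanSpace ℝ (Fin (d + 1)) → ℝ) : ℝ := ⨆ x, |f x|

def lap (d : ℕ) (h : EuclideanSpace ℝ (Fin (d + 1)) → ℝ)
    (x : EuclideanSpace ℝ (Fin (d + 1))) : ℝ :=
  ∑ i : Fin (d + 1),
    fderiv ℝ (fun z => fderiv ℝ h z (EuclideanSpace.single i 1)) x (EuclideanSpace.single i 1)

def LV (d : ℕ) (V h : EuclideanSpace ℝ (Fin (d + 1)) → ℝ)
    (x : EuclideanSpace ℝ (Fin (d + 1))) : ℝ :=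
  lap d h x + (inner ℝ (gradient V x) (gradient h x) : ℝ)

def M0 (d : ℕ) (V : EuclideanSpace ℝ (Fin (d + 1)) → ℝ)
    (W : EuclideanSpace ℝ (Fin d) → ℝ) : ℝ :=
  ⨆ y, max (W y - V (iota d y)) 0

def C0 (d : ℕ) (V : EuclideanSpace ℝ (Fin (d + 1)) → ℝ)
    (W : EuclideanSpace ℝ (Fin d) → ℝ) : ℝ :=
  (ZV d V / ZW d W) * Real.exp (M0 d V W)

def C1 (d : ℕ) (V h : EuclideanSpace ℝ (Fin (d + 1)) → ℝ) : ℝ :=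
  Real.sqrt (muV d V (fun x => (max (-(LV d V h x)) 0) ^ 2))

def C2 (d : ℕ) (V h : EuclideanSpace ℝ (Fin (d + 1)) → ℝ) : ℝ :=
  Real.sqrt (muV d V (fun x => ‖gradient h x‖ ^ 2))

/-- Assumption (A). -/
def AssumptionA (d : ℕ) (V : EuclideanSpace ℝ (Fin (d + 1)) → ℝ)
    (W : EuclideanSpace ℝ (Fin d) → ℝ) (h : EuclideanSpace ℝ (Fin (d + 1)) → ℝ) : Prop :=
  ContDiff ℝ 2 h ∧
  (∀ y, fderiv ℝ h (iota d y) (EuclideanSpace.single 0 1) = 1) ∧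
  BddAbove (Set.range fun y => max (W y - V (iota d y)) 0) ∧
  IntegrableOn (fun x => (max (-(LV d V h x)) 0) ^ 2 * Real.exp (V x)) (Hs d) ∧
  IntegrableOn (fun x => ‖gradient h x‖ ^ 2 * Real.exp (V x)) (Hs d) ∧
  ∀ φ : EuclideanSpace ℝ (Fin (d + 1)) → ℝ, (∃ K, LipschitzWith K φ) →
    (∃ C, ∀ x, |φ x| ≤ C) →
    (∫ y, φ (iota d y) * Real.exp (V (iota d y))) =
      - ∫ x in Hs d,
          (φ x * LV d V h x + (inner ℝ (gradient φ x) (gradient h x) : ℝ)) * Real.exp (V x)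

/-- Assumption (B) with given sup constants. -/
def AssumptionB (d : ℕ) (V : EuclideanSpace ℝ (Fin (d + 1)) → ℝ)
    (W : EuclideanSpace ℝ (Fin d) → ℝ) (h : EuclideanSpace ℝ (Fin (d + 1)) → ℝ)
    (Cb1 Cb2 : ℝ) : Prop :=
  ContDiff ℝ 2 h ∧
  (∀ y, fderiv ℝ h (iota d y) (EuclideanSpace.single 0 1) = 1) ∧
  BddAbove (Set.range fun y => max (W y - V (iota d y)) 0) ∧
  IsLUB ((fun x => max (-(LV d V h x)) 0) '' {x : EuclideanSpace ℝ (Fin (d + 1)) | 0 ≤ x 0}) Cb1 ∧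
  IsLUB ((fun x => ‖gradient h x‖) '' {x : EuclideanSpace ℝ (Fin (d + 1)) | 0 ≤ x 0}) Cb2 ∧
  ∀ φ : EuclideanSpace ℝ (Fin (d + 1)) → ℝ, (∃ K, LipschitzWith K φ) →
    (∃ C, ∀ x, |φ x| ≤ C) →
    (∫ y, φ (iota d y) * Real.exp (V (iota d y))) =
      - ∫ x in Hs d,
          (φ x * LV d V h x + (inner ℝ (gradient φ x) (gradient h x) : ℝ)) * Real.exp (V x)

/-!
Apply the Gauss–Green identity to `φ = f²`: the boundary integral of `f² e^V` equals
`-∫_H (f² L_V h + 2 f ⟨∇f, ∇h⟩) e^V ≤ ∫_H (C̄₁ f² + 2 C̄₂ |f| |∇f|) e^V`. Since `e^W ≤ e^{M₀} e^V`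
on the boundary, normalising gives `μ_W^∂(f²) ≤ C₀ μ_V(C̄₁ f² + 2 C̄₂ |f| |∇f|)`, and Young's
inequality `2 C₀ C̄₂ |f| |∇f| ≤ s |∇f|² + s⁻¹ C₀² C̄₂² f²` concludes.
The comparison of boundary integrals needs the boundary density `e^{V(0,·)}` to be integrable.
This follows from the same Gauss–Green estimate applied to the Lipschitz cutoffs
`min 1 (n - |x|)⁺`, whose boundary integrals are all bounded by `(C̄₁ + C̄₂) Z_V`.
-/

open Filter Metric Set

lemma integral_le_of_ae_le_of_nonneg {α : Type*} [MeasurableSpace α] {μ : Measure α}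
    {f g : α → ℝ} (hg : Integrable g μ) (hg0 : 0 ≤ᵐ[μ] g) (hfg : f ≤ᵐ[μ] g) :
    ∫ x, f x ∂μ ≤ ∫ x, g x ∂μ := by
  by_cases hf : Integrable f μ
  · exact integral_mono_ae hf hg hfg
  · rw [integral_undef hf]
    exact integral_nonneg_of_ae hg0

section Gradient

variable {F : Type*} [NormedAddCommGroup F] [InnerProductSpace ℝ F] [CompleteSpace F]

lemma norm_gradient (f : F → ℝ) (x : F) : ‖gradient f x‖ = ‖fderiv ℝ f x‖ := by
  simp [gradient]

lemma measurable_gradient [FiniteDimensional ℝ F] [MeasurableSpace F] [BorelSpace F]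
    (f : F → ℝ) : Measurable (gradient f) :=
  (InnerProductSpace.toDual ℝ F).symm.continuous.measurable.comp (measurable_fderiv ℝ f)

lemma LipschitzWith.norm_gradient_le {K : NNReal} {f : F → ℝ} (hf : LipschitzWith K f) (x : F) :
    ‖gradient f x‖ ≤ K := by
  rw [norm_gradient]
  exact norm_fderiv_le_of_lipschitz ℝ hf

lemma norm_gradient_sq {f : F → ℝ} (hf : Differentiable ℝ f) (x : F) :
    ‖gradient (fun z => f z ^ 2) x‖ = 2 * |f x| * ‖gradient f x‖ := by
  have hsq : HasFDerivAt (fun z => f z ^ 2) ((2 * f x) • fderiv ℝ f x) x := by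
    simp only [sq, two_mul, add_smul]
    exact (hf x).hasFDerivAt.mul (hf x).hasFDerivAt
  rw [norm_gradient, hsq.fderiv, norm_smul, norm_gradient, Real.norm_eq_abs, abs_mul, abs_two]

end Gradient

section Cutoff

variable {E : Type*} [NormedAddCommGroup E]

def cutoff (R : ℝ) (x : E) : ℝ := min 1 (max 0 (R - ‖x‖))

lemma lipschitzWith_cutoff (R : ℝ) : LipschitzWith 1 (cutoff R : E → ℝ) := by
  have hR : LipschitzWith 1 fun x : E => R - ‖x‖ := by
    simpa using (LipschitzWith.const (α := E) R).sub lipschitzWith_one_norm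
  exact (hR.const_max 0).const_min 1

lemma cutoff_nonneg (R : ℝ) (x : E) : 0 ≤ cutoff R x := le_min zero_le_one (le_max_left _ _)

lemma cutoff_le_one (R : ℝ) (x : E) : cutoff R x ≤ 1 := min_le_left _ _

lemma abs_cutoff_le_one (R : ℝ) (x : E) : |cutoff R x| ≤ 1 := by
  rw [abs_of_nonneg (cutoff_nonneg R x)]
  exact cutoff_le_one R x

lemma cutoff_eq_zero {R : ℝ} {x : E} (hx : R ≤ ‖x‖) : cutoff R x = 0 := by
  simp [cutoff, hx]

lemma cutoff_eq_one {R : ℝ} {x : E} (hx : ‖x‖ + 1 ≤ R) : cutoff R x = 1 := by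
  rw [cutoff, max_eq_right (by linarith [norm_nonneg x]), min_eq_left (by linarith)]

lemma hasCompactSupport_cutoff [ProperSpace E] (R : ℝ) : HasCompactSupport (cutoff R : E → ℝ) :=
  HasCompactSupport.intro (isCompact_closedBall 0 R) fun x hx =>
    cutoff_eq_zero (by rw [mem_closedBall_zero_iff, not_le] at hx; exact hx.le)

lemma integrable_of_integral_cutoff_mul_le [ProperSpace E] [MeasurableSpace E] [BorelSpace E]
    {μ : Measure E} [IsFiniteMeasureOnCompacts μ] {g : E → ℝ} (hg : Continuous g)
    (hg0 : ∀ x, 0 ≤ g x) {C : ℝ} (hC : ∀ n : ℕ, ∫ x, cutoff n x * g x ∂μ ≤ C) :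
    Integrable g μ := by
  have hcover := aecover_closedBall (μ := μ) (x := (0 : E)) tendsto_natCast_atTop_atTop
  refine hcover.integrable_of_integral_bounded_of_nonneg_ae C
    (fun n => hg.continuousOn.integrableOn_compact (isCompact_closedBall 0 n)) (ae_of_all _ hg0)
    (Eventually.of_forall fun n => le_trans ?_ (hC (n + 1)))
  have hcut : Integrable (fun x => cutoff (n + 1 : ℕ) x * g x) μ :=
    ((lipschitzWith_cutoff _).continuous.mul hg).integrable_of_hasCompactSupport
      (hasCompactSupport_cutoff _).mul_right
  rw [← integral_indicator measurableSet_closedBall]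
  refine integral_mono_of_nonneg (ae_of_all _ fun x => indicator_nonneg (fun x _ => hg0 x) x)
    hcut (ae_of_all _ fun x => ?_)
  by_cases hx : x ∈ closedBall (0 : E) n
  · have hx' : ‖x‖ + 1 ≤ ((n + 1 : ℕ) : ℝ) := by push_cast; simpa using hx
    simp only [indicator_of_mem hx, cutoff_eq_one hx', one_mul, le_refl]
  · rw [indicator_of_notMem hx]
    exact mul_nonneg (cutoff_nonneg _ _) (hg0 x)

end Cutoff

lemma isOpen_Hs (d : ℕ) : IsOpen (Hs d) :=
  isOpen_lt continuous_const (EuclideanSpace.proj (0 : Fin (d + 1))).continuous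

lemma continuous_iota (d : ℕ) : Continuous (iota d) :=
  (PiLp.continuous_toLp 2 _).comp (continuous_const.finCons (PiLp.continuous_ofLp 2 _))

lemma norm_iota {d : ℕ} (y : EuclideanSpace ℝ (Fin d)) : ‖iota d y‖ = ‖y‖ := by
  simp [EuclideanSpace.norm_eq, iota, Fin.sum_univ_succ]

lemma ZV_pos {d : ℕ} {V : EuclideanSpace ℝ (Fin (d + 1)) → ℝ}
    (hZV : IntegrableOn (fun x => Real.exp (V x)) (Hs d)) : 0 < ZV d V := by
  have : NeZero (volume.restrict (Hs d)) := ⟨by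
    rw [Ne, Measure.restrict_eq_zero]
    exact (isOpen_Hs d).measure_ne_zero volume ⟨EuclideanSpace.single 0 1, by simp [Hs]⟩⟩
  exact integral_exp_pos hZV

lemma integrableOn_Hs_mul_exp {d : ℕ} {V : EuclideanSpace ℝ (Fin (d + 1)) → ℝ}
    (hZV : IntegrableOn (fun x => Real.exp (V x)) (Hs d)) {u : EuclideanSpace ℝ (Fin (d + 1)) → ℝ}
    (hu : AEStronglyMeasurable u) {C : ℝ} (hC : ∀ x, |u x| ≤ C) :
    IntegrableOn (fun x => u x * Real.exp (V x)) (Hs d) :=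
  hZV.bdd_mul hu.restrict (ae_of_all _ hC)

def GaussGreenIdentity (d : ℕ) (V h : EuclideanSpace ℝ (Fin (d + 1)) → ℝ) : Prop :=
  ∀ φ : EuclideanSpace ℝ (Fin (d + 1)) → ℝ, (∃ K, LipschitzWith K φ) →
    (∃ C, ∀ x, |φ x| ≤ C) →
    (∫ y, φ (iota d y) * Real.exp (V (iota d y))) =
      - ∫ x in Hs d,
          (φ x * LV d V h x + (inner ℝ (gradient φ x) (gradient h x) : ℝ)) * Real.exp (V x)

section GaussGreen

variable {d : ℕ} {V h : EuclideanSpace ℝ (Fin (d + 1)) → ℝ} {Cb1 Cb2 : ℝ}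

lemma integral_boundary_le
    (hZV : IntegrableOn (fun x => Real.exp (V x)) (Hs d)) (hGG : GaussGreenIdentity d V h)
    (hC1 : Cb1 ∈ upperBounds ((fun x => max (-(LV d V h x)) 0) '' {x | 0 ≤ x 0}))
    (hC2 : Cb2 ∈ upperBounds ((fun x => ‖gradient h x‖) '' {x | 0 ≤ x 0}))
    {φ : EuclideanSpace ℝ (Fin (d + 1)) → ℝ}
    (hφL : ∃ K, LipschitzWith K φ) (hφb : ∃ C, ∀ x, |φ x| ≤ C) (hφ0 : ∀ x, 0 ≤ φ x) :
    ∫ y, φ (iota d y) * Real.exp (V (iota d y))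
      ≤ ∫ x in Hs d, (Cb1 * φ x + Cb2 * ‖gradient φ x‖) * Real.exp (V x) := by
  obtain ⟨K, hK⟩ := hφL
  obtain ⟨C, hC⟩ := hφb
  have hCb1 : 0 ≤ Cb1 := (le_max_right _ _).trans (hC1 ⟨0, by simp, rfl⟩)
  have hCb2 : 0 ≤ Cb2 := (norm_nonneg _).trans (hC2 ⟨0, by simp, rfl⟩)
  have hint : IntegrableOn (fun x => (Cb1 * φ x + Cb2 * ‖gradient φ x‖) * Real.exp (V x)) (Hs d) :=
    integrableOn_Hs_mul_exp hZV (C := Cb1 * C + Cb2 * K)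
      ((hK.continuous.measurable.const_mul Cb1).add
        ((measurable_gradient φ).norm.const_mul Cb2)).aestronglyMeasurable
      fun x => by
        rw [abs_of_nonneg (by have := hφ0 x; positivity)]
        gcongr
        exacts [(le_abs_self _).trans (hC x), hK.norm_gradient_le x]
  rw [hGG φ ⟨K, hK⟩ ⟨C, hC⟩, ← integral_neg]
  -- `L_V h` is only bounded below, so the Gauss–Green integrand need not be integrable.
  refine integral_le_of_ae_le_of_nonneg hint ?_ ?_ <;>
    refine (ae_restrict_iff' (isOpen_Hs d).measurableSet).2 (ae_of_all _ fun x hx => ?_)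
  · have := hφ0 x
    positivity
  · have hx0 : (0 : ℝ) ≤ x 0 := le_of_lt hx
    have hLV : φ x * -LV d V h x ≤ Cb1 * φ x := by
      nlinarith [le_max_left (-LV d V h x) 0, hC1 ⟨x, hx0, rfl⟩, hφ0 x]
    have hinner : -inner ℝ (gradient φ x) (gradient h x) ≤ Cb2 * ‖gradient φ x‖ := by
      nlinarith [neg_le_abs (inner ℝ (gradient φ x) (gradient h x)),
        abs_real_inner_le_norm (gradient φ x) (gradient h x), hC2 ⟨x, hx0, rfl⟩,
        norm_nonneg (gradient φ x)]
    calc -((φ x * LV d V h x + inner ℝ (gradient φ x) (gradient h x)) * Real.exp (V x))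
        = (φ x * -LV d V h x + -inner ℝ (gradient φ x) (gradient h x)) * Real.exp (V x) := by
          ring
      _ ≤ (Cb1 * φ x + Cb2 * ‖gradient φ x‖) * Real.exp (V x) := by gcongr

lemma integrable_exp_comp_iota (hV : Continuous V)
    (hZV : IntegrableOn (fun x => Real.exp (V x)) (Hs d)) (hGG : GaussGreenIdentity d V h)
    (hC1 : Cb1 ∈ upperBounds ((fun x => max (-(LV d V h x)) 0) '' {x | 0 ≤ x 0}))
    (hC2 : Cb2 ∈ upperBounds ((fun x => ‖gradient h x‖) '' {x | 0 ≤ x 0})) :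
    Integrable fun y => Real.exp (V (iota d y)) := by
  have hCb1 : 0 ≤ Cb1 := (le_max_right _ _).trans (hC1 ⟨0, by simp, rfl⟩)
  have hCb2 : 0 ≤ Cb2 := (norm_nonneg _).trans (hC2 ⟨0, by simp, rfl⟩)
  refine integrable_of_integral_cutoff_mul_le
    (Real.continuous_exp.comp (hV.comp (continuous_iota d))) (fun y => (Real.exp_pos _).le)
    (C := (Cb1 + Cb2) * ZV d V) fun n => ?_
  have hiota : ∀ y, cutoff n y = cutoff n (iota d y) := fun y => by simp only [cutoff, norm_iota]
  calc ∫ y, cutoff n y * Real.exp (V (iota d y))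
      = ∫ y, cutoff n (iota d y) * Real.exp (V (iota d y)) := by simp only [← hiota]
    _ ≤ ∫ x in Hs d, (Cb1 * cutoff n x + Cb2 * ‖gradient (cutoff n) x‖) * Real.exp (V x) :=
      integral_boundary_le hZV hGG hC1 hC2 ⟨1, lipschitzWith_cutoff _⟩ ⟨1, abs_cutoff_le_one _⟩
        (cutoff_nonneg _)
    _ ≤ ∫ x in Hs d, (Cb1 + Cb2) * Real.exp (V x) := by
      refine integral_le_of_ae_le_of_nonneg (hZV.const_mul _) ?_ ?_ <;>
        refine ae_of_all _ fun x => ?_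
      · positivity
      · have hgrad : ‖gradient (cutoff n) x‖ ≤ 1 := by
          simpa using (lipschitzWith_cutoff (n : ℝ)).norm_gradient_le x
        dsimp only
        gcongr (?_ + ?_) * _
        · exact mul_le_of_le_one_right hCb1 (cutoff_le_one _ x)
        · exact mul_le_of_le_one_right hCb2 hgrad
    _ = (Cb1 + Cb2) * ZV d V := integral_const_mul _ _

end GaussGreen

section TestFunction

variable {d : ℕ} {f : EuclideanSpace ℝ (Fin (d + 1)) → ℝ}

lemma IsTest.lipschitzWith (hf : IsTest d f) : ∃ K, LipschitzWith K f := by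
  obtain ⟨hf1, -, G, hG⟩ := hf
  refine ⟨G.toNNReal, lipschitzWith_of_nnnorm_fderiv_le (hf1.differentiable one_ne_zero)
    fun x => ?_⟩
  rw [← NNReal.coe_le_coe, coe_nnnorm, ← norm_gradient]
  exact (hG x).trans (Real.le_coe_toNNReal G)

lemma IsTest.sq (hf : IsTest d f) : IsTest d fun x => f x ^ 2 := by
  obtain ⟨hf1, ⟨C, hC⟩, G, hG⟩ := hf
  have hC0 : 0 ≤ C := (abs_nonneg _).trans (hC 0)
  refine ⟨hf1.pow 2, ⟨C ^ 2, fun x => ?_⟩, 2 * C * G, fun x => ?_⟩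
  · rw [abs_pow]
    exact pow_le_pow_left₀ (abs_nonneg _) (hC x) 2
  · rw [norm_gradient_sq (hf1.differentiable one_ne_zero)]
    gcongr
    exacts [hC x, hG x]

variable {V : EuclideanSpace ℝ (Fin (d + 1)) → ℝ}

lemma IsTest.integrableOn_sq_mul_exp (hZV : IntegrableOn (fun x => Real.exp (V x)) (Hs d))
    (hf : IsTest d f) : IntegrableOn (fun x => f x ^ 2 * Real.exp (V x)) (Hs d) := by
  obtain ⟨hf1, ⟨C, hC⟩, -⟩ := hf.sq
  exact integrableOn_Hs_mul_exp hZV hf1.continuous.aestronglyMeasurable hC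

lemma IsTest.integrableOn_norm_gradient_sq_mul_exp
    (hZV : IntegrableOn (fun x => Real.exp (V x)) (Hs d)) (hf : IsTest d f) :
    IntegrableOn (fun x => ‖gradient f x‖ ^ 2 * Real.exp (V x)) (Hs d) := by
  obtain ⟨-, -, G, hG⟩ := hf
  refine integrableOn_Hs_mul_exp hZV (C := G ^ 2)
    ((measurable_gradient f).norm.pow_const 2).aestronglyMeasurable fun x => ?_
  rw [abs_pow, abs_norm]
  exact pow_le_pow_left₀ (norm_nonneg _) (hG x) 2

end TestFunction

section Normalisation

variable {d : ℕ} {V : EuclideanSpace ℝ (Fin (d + 1)) → ℝ} {W : EuclideanSpace ℝ (Fin d) → ℝ}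

lemma exp_le_exp_M0_mul_exp (hM : BddAbove (range fun y => max (W y - V (iota d y)) 0))
    (y : EuclideanSpace ℝ (Fin d)) :
    Real.exp (W y) ≤ Real.exp (M0 d V W) * Real.exp (V (iota d y)) := by
  rw [← Real.exp_add, Real.exp_le_exp, M0]
  linarith [(le_max_left _ _).trans (le_ciSup hM y)]

lemma nuW_le_C0_mul (hM : BddAbove (range fun y => max (W y - V (iota d y)) 0))
    (hZV : ZV d V ≠ 0) {ψ : EuclideanSpace ℝ (Fin d) → ℝ} (hψ0 : ∀ y, 0 ≤ ψ y)
    (hψ : Integrable fun y => ψ y * Real.exp (V (iota d y))) :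
    nuW d W ψ ≤ C0 d V W * ((ZV d V)⁻¹ * ∫ y, ψ y * Real.exp (V (iota d y))) := by
  have hZW : 0 ≤ ZW d W := integral_nonneg fun _ => (Real.exp_pos _).le
  calc nuW d W ψ
      ≤ (ZW d W)⁻¹ * ∫ y, Real.exp (M0 d V W) * (ψ y * Real.exp (V (iota d y))) := by
        refine mul_le_mul_of_nonneg_left (integral_mono_of_nonneg
          (ae_of_all _ fun y => by have := hψ0 y; positivity) (hψ.const_mul _)
          (ae_of_all _ fun y => ?_)) (inv_nonneg.2 hZW)
        have := mul_le_mul_of_nonneg_left (exp_le_exp_M0_mul_exp hM y) (hψ0 y)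
        linarith
    _ = C0 d V W * ((ZV d V)⁻¹ * ∫ y, ψ y * Real.exp (V (iota d y))) := by
        rw [integral_const_mul, C0]
        field_simp

lemma ZV_nonneg : 0 ≤ ZV d V :=
  setIntegral_nonneg (isOpen_Hs d).measurableSet fun _ _ => (Real.exp_pos _).le

lemma C0_nonneg : 0 ≤ C0 d V W :=
  mul_nonneg (div_nonneg ZV_nonneg (integral_nonneg fun _ => (Real.exp_pos _).le))
    (Real.exp_pos _).le

lemma mul_muV (c : ℝ) (φ : EuclideanSpace ℝ (Fin (d + 1)) → ℝ) :
    c * muV d V φ = muV d V fun x => c * φ x := by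
  simp only [muV, mul_assoc, ← integral_const_mul]
  ring_nf

lemma muV_le_add_mul {F φ ψ : EuclideanSpace ℝ (Fin (d + 1)) → ℝ} {a b : ℝ}
    (hφ : IntegrableOn (fun x => φ x * Real.exp (V x)) (Hs d))
    (hψ : IntegrableOn (fun x => ψ x * Real.exp (V x)) (Hs d))
    (hRHS : ∀ x ∈ Hs d, 0 ≤ a * φ x + b * ψ x) (hF : ∀ x ∈ Hs d, F x ≤ a * φ x + b * ψ x) :
    muV d V F ≤ a * muV d V φ + b * muV d V ψ := by
  have hsum : a * muV d V φ + b * muV d V ψ = muV d V fun x => a * φ x + b * ψ x := by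
    simp only [muV, add_mul, mul_assoc, integral_add (hφ.const_mul a) (hψ.const_mul b),
      integral_const_mul]
    ring
  rw [hsum, muV, muV]
  refine mul_le_mul_of_nonneg_left (integral_le_of_ae_le_of_nonneg ?_ ?_ ?_)
    (inv_nonneg.2 ZV_nonneg)
  · exact IntegrableOn.congr_fun ((hφ.const_mul a).add (hψ.const_mul b))
      (fun x _ => by dsimp only [Pi.add_apply]; ring) (isOpen_Hs d).measurableSet
  all_goals refine (ae_restrict_iff' (isOpen_Hs d).measurableSet).2 (ae_of_all _ fun x hx => ?_)
  · have := hRHS x hx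
    positivity
  · exact mul_le_mul_of_nonneg_right (hF x hx) (Real.exp_pos _).le

end Normalisation

lemma mul_add_cross_term_le {s : ℝ} (hs : 0 < s) (c p q u v : ℝ) :
    c * (p * u ^ 2 + q * (2 * |u| * v)) ≤ s * v ^ 2 + (s⁻¹ * c ^ 2 * q ^ 2 + c * p) * u ^ 2 := by
  have := two_mul_le_add_mul_sq (a := c * q * |u|) (b := v) (inv_pos.2 hs)
  rw [inv_inv, mul_pow, mul_pow, sq_abs] at this
  linear_combination this

theorem sticky_boundary_trace_general
    (d : ℕ)
    (V : EuclideanSpace ℝ (Fin (d + 1)) → ℝ) (W : EuclideanSpace ℝ (Fin d) → ℝ)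
    (hV : ContDiff ℝ 1 V)
    (hZV : IntegrableOn (fun x => Real.exp (V x)) (Hs d))
    (h : EuclideanSpace ℝ (Fin (d + 1)) → ℝ) (Cb1 Cb2 : ℝ)
    (hB : AssumptionB d V W h Cb1 Cb2) :
    ∀ s, 0 < s → ∀ f, IsTest d f →
      nuW d W (fun y => f (iota d y) ^ 2) ≤ s * gV d V f
        + (s⁻¹ * C0 d V W ^ 2 * Cb2 ^ 2 + C0 d V W * Cb1) * muV d V (fun x => f x ^ 2) := by
  intro s hs f hf
  obtain ⟨-, -, hM, hC1, hC2, hGG⟩ := hB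
  have hZV0 := ZV_pos hZV
  have hC0 : 0 ≤ C0 d V W := C0_nonneg
  have hCb1 : 0 ≤ Cb1 := (le_max_right _ _).trans (hC1.1 ⟨0, by simp, rfl⟩)
  obtain ⟨-, ⟨C, hC⟩, -⟩ := hf.sq
  have hbdry : Integrable fun y => f (iota d y) ^ 2 * Real.exp (V (iota d y)) :=
    (integrable_exp_comp_iota hV.continuous hZV hGG hC1.1 hC2.1).bdd_mul
      ((hf.1.continuous.comp (continuous_iota d)).pow 2).aestronglyMeasurable
      (ae_of_all _ fun y => hC _)
  calc nuW d W (fun y => f (iota d y) ^ 2)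
      ≤ C0 d V W * ((ZV d V)⁻¹ * ∫ y, f (iota d y) ^ 2 * Real.exp (V (iota d y))) :=
        nuW_le_C0_mul hM hZV0.ne' (fun _ => sq_nonneg _) hbdry
    _ ≤ C0 d V W * muV d V fun x => Cb1 * f x ^ 2 + Cb2 * ‖gradient (fun z => f z ^ 2) x‖ := by
        refine mul_le_mul_of_nonneg_left (mul_le_mul_of_nonneg_left ?_ (inv_nonneg.2 hZV0.le)) hC0
        exact integral_boundary_le hZV hGG hC1.1 hC2.1 hf.sq.lipschitzWith ⟨C, hC⟩
          fun _ => sq_nonneg _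
    _ = muV d V fun x => C0 d V W * (Cb1 * f x ^ 2 + Cb2 * ‖gradient (fun z => f z ^ 2) x‖) :=
        mul_muV _ _
    _ ≤ s * gV d V f
        + (s⁻¹ * C0 d V W ^ 2 * Cb2 ^ 2 + C0 d V W * Cb1) * muV d V (fun x => f x ^ 2) := by
        refine muV_le_add_mul (hf.integrableOn_norm_gradient_sq_mul_exp hZV)
          (hf.integrableOn_sq_mul_exp hZV) (fun x _ => by positivity) fun x _ => ?_
        rw [norm_gradient_sq (hf.1.differentiable one_ne_zero)]
        exact mul_add_cross_term_le hs _ _ _ _ _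

/-- boundary trace inequality under Assumption (B). -/
theorem sticky_boundary_trace
    (d : ℕ) (hd : 1 ≤ d)
    (V : EuclideanSpace ℝ (Fin (d + 1)) → ℝ) (W : EuclideanSpace ℝ (Fin d) → ℝ)
    (hV : ContDiff ℝ 1 V) (hW : Continuous W)
    (hZV : IntegrableOn (fun x => Real.exp (V x)) (Hs d))
    (hZW : Integrable fun y => Real.exp (W y))
    (h : EuclideanSpace ℝ (Fin (d + 1)) → ℝ) (Cb1 Cb2 : ℝ)
    (hB : AssumptionB d V W h Cb1 Cb2) :
    ∀ s, 0 < s → ∀ f, IsTest d f →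
      nuW d W (fun y => f (iota d y) ^ 2) ≤ s * gV d V f
        + (s⁻¹ * C0 d V W ^ 2 * Cb2 ^ 2 + C0 d V W * Cb1) * muV d V (fun x => f x ^ 2) :=
  sticky_boundary_trace_general d V W hV hZV h Cb1 Cb2 hB
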